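/- Let M be a real number, N a natural number, and P a real polynomial of degree at most N. Define F : ℝ → ℝ by F(x) = e^{Mx} · P(e^x). If F^{(k)}(0) = 0 for every k with 0 ≤ k ≤ N, then F(x) = 0 for all real x. -/

import Mathlib

/-!
Expanding `P` in powers of `t = e^x` writes `F` as the exponential sum
`∑_{i ≤ N} pᵢ e^{(M + i) x}`, whose `k`-th derivative at `0` is `∑ pᵢ (M + i)^k`.
The vanishing of these for `k ≤ N` is a Vandermonde system in the distinct rates `M + i`,
so every coefficient `pᵢ` is zero.
-/

open Real Finset

theorem iteratedDeriv_sum_mul_exp_const_mul {ι : Type*} (s : Finset ι) (a c : ι → ℝ)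
    (k : ℕ) (x : ℝ) :
    iteratedDeriv k (fun x => ∑ i ∈ s, a i * exp (c i * x)) x
      = ∑ i ∈ s, a i * c i ^ k * exp (c i * x) := by
  rw [iteratedDeriv_fun_sum fun i _ => by fun_prop]
  refine sum_congr rfl fun i _ => ?_
  rw [iteratedDeriv_const_mul_field, iteratedDeriv_exp_const_mul, mul_assoc]

theorem eq_zero_of_iteratedDeriv_sum_mul_exp_const_mul_eq_zero {n : ℕ} {a c : Fin n → ℝ}
    (hc : Function.Injective c)
    (h : ∀ k < n, iteratedDeriv k (fun x => ∑ i, a i * exp (c i * x)) 0 = 0) : a = 0 :=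
  Matrix.eq_zero_of_forall_pow_sum_mul_pow_eq_zero hc fun k => by
    simpa [iteratedDeriv_sum_mul_exp_const_mul] using h k k.isLt

theorem exp_mul_mul_eval_exp_eq_sum {N : ℕ} (M : ℝ) {P : Polynomial ℝ} (hP : P.natDegree ≤ N)
    (x : ℝ) :
    exp (M * x) * P.eval (exp x) = ∑ i : Fin (N + 1), P.coeff i * exp ((M + i) * x) := by
  rw [Polynomial.eval_eq_sum_range' (Nat.lt_succ_of_le hP), mul_sum,
    ← Fin.sum_univ_eq_sum_range]
  refine sum_congr rfl fun i _ => ?_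
  rw [add_mul, exp_add, ← exp_nat_mul]
  ring

/-- If `P` is a real polynomial of degree at most `N`,
`F x = e^{M x} * P (e^x)`, and `F^{(k)}(0) = 0` for all `k ≤ N`,
then `F` vanishes identically. -/
theorem stmt_3 (M : ℝ) (N : ℕ) (P : Polynomial ℝ) (hP : P.natDegree ≤ N)
    (h : ∀ k ≤ N,
      iteratedDeriv k (fun x : ℝ => Real.exp (M * x) * P.eval (Real.exp x)) 0 = 0) :
    ∀ x : ℝ, Real.exp (M * x) * P.eval (Real.exp x) = 0 := by
  have hF := funext (exp_mul_mul_eval_exp_eq_sum M hP)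
  have hrates : Function.Injective fun i : Fin (N + 1) => M + i := fun i j hij => by
    exact Fin.ext (by exact_mod_cast add_left_cancel hij)
  have hcoeff : (fun i : Fin (N + 1) => P.coeff i) = 0 :=
    eq_zero_of_iteratedDeriv_sum_mul_exp_const_mul_eq_zero hrates fun k hk =>
      hF ▸ h k (Nat.le_of_lt_succ hk)
  intro x
  simp [exp_mul_mul_eval_exp_eq_sum M hP x, congrFun hcoeff]
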